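/- Let 𝒰 ≠ {Ω_n, ∅} be a union closed set on Ω_n with non-empty members A₁ < A₂ < ⋯ < A_k (in the order <) such that 𝒰 is not canonical but the family {A₁, …, A_{k−1}, ∅} is canonical, and let m = |A_k|. Then every permutation Π of Ω_n with s(Π(𝒰)) lexicographically smaller than s(𝒰) satisfies Π(𝒰_{m+1}) = 𝒰_{m+1}, where 𝒰_{m+1} is the set of all members of 𝒰 of cardinality at least m+1. -/

import Mathlib

/-- Binary encoding of a subset `A ⊆ Ω_n = {1,…,n}` (modeled as `Finset (Fin n)`):
`b(A) = Σ_{i∈A} 2^(i-1)`. -/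
def bcode {n : ℕ} (A : Finset (Fin n)) : ℕ := ∑ i ∈ A, 2 ^ (i : ℕ)

/-- The order on subsets of `Ω_n`: `A < B` iff `B` has fewer elements than `A`
(sets with more elements are smaller), or they have the same number of elements
and `b(A) < b(B)`. -/
def setLT {n : ℕ} (A B : Finset (Fin n)) : Prop :=
  B.card < A.card ∨ (A.card = B.card ∧ bcode A < bcode B)

/-- A numeric key encoding the order `setLT`: since `bcode A < 2^n`, we have
`setLT A B ↔ key A < key B`. -/
def key {n : ℕ} (A : Finset (Fin n)) : ℕ := (n - A.card) * 2 ^ n + bcode A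

/-- A union closed set on `Ω_n`: a family of subsets of `Ω_n` closed under
pairwise unions that contains the full set `Ω_n` and the empty set. -/
def IsUCS {n : ℕ} (U : Finset (Finset (Fin n))) : Prop :=
  (∀ A ∈ U, ∀ B ∈ U, A ∪ B ∈ U) ∧ Finset.univ ∈ U ∧ ∅ ∈ U

/-- The action of a permutation `Π` of `Ω_n` on a family of sets:
each element of each set is replaced by its image under `Π`. -/
def permFam {n : ℕ} (π : Equiv.Perm (Fin n)) (U : Finset (Finset (Fin n))) :
    Finset (Finset (Fin n)) := U.image (fun A => A.image π)

/-- The string `s(𝒰)` of a family `𝒰`: the keys of the non-empty members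
listed in increasing order `A₁ < A₂ < ⋯ < A_k` (w.r.t. `setLT`). -/
def sStr {n : ℕ} (U : Finset (Finset (Fin n))) : List ℕ :=
  ((U.filter (fun A => A ≠ ∅)).image key).sort (· ≤ ·)

/-- A family `𝒰` is canonical if `s(𝒰)` is lexicographically ≤ `s(Π(𝒰))` for
every permutation `Π` of `Ω_n`, i.e. no permutation yields a lexicographically
smaller string. -/
def IsCanonical {n : ℕ} (U : Finset (Finset (Fin n))) : Prop :=
  ∀ π : Equiv.Perm (Fin n), ¬ List.Lex (· < ·) (sStr (permFam π U)) (sStr U)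

/-! Members of cardinality `> m` precede all others in the order, so `s(𝒰)` is `s(𝒰_{m+1})`
followed by the string of the smaller members, and likewise for `Π(𝒰)`, `𝒰 ∖ {A}` and
`Π(𝒰 ∖ {A})`. As `|A| = m`, the families `𝒰` and `𝒰 ∖ {A}` have the same upper part `𝒰_{m+1}`,
and `Π` preserves cardinalities, so both comparisons start with the equally long blocks
`s(Π(𝒰_{m+1}))` and `s(𝒰_{m+1})`. Were these different, both comparisons would be decided
there with the same outcome, and `Π` would witness that `𝒰 ∖ {A}` is not canonical. Equal
strings of families of non-empty sets come from equal families. -/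

theorem Finset.sort_union_of_forall_lt {α : Type*} [LinearOrder α] {s t : Finset α}
    (h : ∀ x ∈ s, ∀ y ∈ t, x < y) : (s ∪ t).sort = s.sort ++ t.sort := by
  have hsorted : (s.sort ++ t.sort).Pairwise (· < ·) :=
    List.pairwise_append.2 ⟨(Finset.sortedLT_sort s).pairwise, (Finset.sortedLT_sort t).pairwise,
      fun x hx y hy => h x (Finset.mem_sort _ |>.1 hx) y (Finset.mem_sort _ |>.1 hy)⟩
  rw [← (List.toFinset_sort _ (hsorted.imp ne_of_lt)).2 (hsorted.imp le_of_lt),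
    List.toFinset_append, Finset.sort_toFinset, Finset.sort_toFinset]

theorem List.eq_of_lex_append_of_not_lex_append {α : Type*} {r : α → α → Prop}
    {p p' x y z w : List α} (hlen : p'.length = p.length)
    (h : List.Lex r (p' ++ x) (p ++ y)) (h' : ¬ List.Lex r (p' ++ z) (p ++ w)) : p' = p := by
  induction p generalizing p' with
  | nil => exact List.eq_nil_of_length_eq_zero hlen
  | cons a p ih =>
    obtain _ | ⟨a', p'⟩ := p'
    · simp at hlen
    cases h with
    | rel hr => exact absurd (List.Lex.rel hr) h'
    | cons h => rw [ih (Nat.succ_inj.1 hlen) h fun hl => h' (List.Lex.cons hl)]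

theorem bcode_eq_sum_map {n : ℕ} (A : Finset (Fin n)) :
    bcode A = ∑ i ∈ A.map Fin.valEmbedding, 2 ^ i := by
  simp [bcode]

theorem bcode_injective {n : ℕ} : Function.Injective (bcode (n := n)) := by
  intro A B h
  rw [bcode_eq_sum_map, bcode_eq_sum_map] at h
  exact Finset.map_injective _ (Finset.geomSum_injective le_rfl h)

theorem bcode_lt_two_pow {n : ℕ} (A : Finset (Fin n)) : bcode A < 2 ^ n := by
  rw [bcode_eq_sum_map]
  exact Nat.geomSum_lt le_rfl (by simp)

theorem key_mod_two_pow {n : ℕ} (A : Finset (Fin n)) : key A % 2 ^ n = bcode A := by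
  rw [key, Nat.mul_add_mod_self_right, Nat.mod_eq_of_lt (bcode_lt_two_pow A)]

theorem key_injective {n : ℕ} : Function.Injective (key (n := n)) := fun A B h =>
  bcode_injective (by rw [← key_mod_two_pow, h, key_mod_two_pow])

theorem key_lt_key_of_card_lt {n : ℕ} {A B : Finset (Fin n)} (h : A.card < B.card) :
    key B < key A := by
  have hB : B.card ≤ n := card_finset_fin_le B
  calc key B < (n - B.card) * 2 ^ n + 2 ^ n := Nat.add_lt_add_left (bcode_lt_two_pow B) _
    _ = (n - B.card + 1) * 2 ^ n := by ring
    _ ≤ (n - A.card) * 2 ^ n := Nat.mul_le_mul_right _ (by omega)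
    _ ≤ key A := Nat.le_add_right _ _

theorem sStr_eq_append {n : ℕ} (m : ℕ) (V : Finset (Finset (Fin n))) :
    sStr V =
      sStr (V.filter (fun B => m + 1 ≤ B.card)) ++ sStr (V.filter (fun B => B.card ≤ m)) := by
  rw [sStr, sStr, sStr, ← Finset.sort_union_of_forall_lt, ← Finset.image_union,
    Finset.filter_filter, Finset.filter_filter, ← Finset.filter_or]
  · congr 2
    refine Finset.filter_congr fun B _ => ?_
    have : m + 1 ≤ B.card ∨ B.card ≤ m := by omega
    tauto
  · simp only [Finset.mem_image, Finset.mem_filter]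
    rintro _ ⟨B, ⟨⟨-, hB⟩, -⟩, rfl⟩ _ ⟨C, ⟨⟨-, hC⟩, -⟩, rfl⟩
    exact key_lt_key_of_card_lt (by omega)

theorem sStr_injOn {n : ℕ} : Set.InjOn (sStr (n := n)) {V | ∅ ∉ V} := by
  intro V hV W hW h
  have hfilter {V : Finset (Finset (Fin n))} (hV : ∅ ∉ V) : V.filter (fun A => A ≠ ∅) = V :=
    Finset.filter_true_of_mem fun A hA hA0 => hV (hA0 ▸ hA)
  rw [sStr, sStr, hfilter hV, hfilter hW] at h
  exact Finset.image_injective key_injective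
    (by rw [← Finset.sort_toFinset (V.image key) (· ≤ ·), h, Finset.sort_toFinset])

theorem permFam_filter_card {n : ℕ} (π : Equiv.Perm (Fin n)) (V : Finset (Finset (Fin n)))
    (p : ℕ → Prop) [DecidablePred p] :
    (permFam π V).filter (fun B => p B.card) = permFam π (V.filter fun B => p B.card) := by
  simp [permFam, Finset.filter_image, Finset.card_image_of_injective _ π.injective]

theorem length_sStr_permFam {n : ℕ} (π : Equiv.Perm (Fin n)) (V : Finset (Finset (Fin n))) :
    (sStr (permFam π V)).length = (sStr V).length := by
  simp [sStr, permFam, Finset.filter_image, Finset.card_image_of_injective _ key_injective,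
    Finset.card_image_of_injective _ (Finset.image_injective π.injective)]

theorem lex_smaller_perm_fixes_upper_general {n : ℕ} (U : Finset (Finset (Fin n)))
    (A : Finset (Fin n))
    (hcan : IsCanonical (U.erase A))
    (π : Equiv.Perm (Fin n))
    (hπ : List.Lex (· < ·) (sStr (permFam π U)) (sStr U)) :
    permFam π (U.filter (fun B => A.card + 1 ≤ B.card)) =
      U.filter (fun B => A.card + 1 ≤ B.card) := by
  have hupper : (U.erase A).filter (fun B => A.card + 1 ≤ B.card) =
      U.filter (fun B => A.card + 1 ≤ B.card) := by
    rw [Finset.filter_erase]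
    exact Finset.erase_eq_of_notMem (by simp)
  have hnot := hcan π
  rw [sStr_eq_append A.card, sStr_eq_append A.card U, permFam_filter_card] at hπ
  rw [sStr_eq_append A.card, sStr_eq_append A.card (U.erase A), permFam_filter_card,
    hupper] at hnot
  refine sStr_injOn ?_ ?_ (List.eq_of_lex_append_of_not_lex_append
    (length_sStr_permFam π _) hπ hnot)
  all_goals simp [permFam]

/-- Let `𝒰 ≠ {Ω_n, ∅}` be a union closed set with non-empty members
`A₁ < A₂ < ⋯ < A_k` (so `A = A_k` is its largest non-empty member), such that `𝒰`
is not canonical but `{A₁, …, A_{k-1}, ∅} = 𝒰 \ {A}` is canonical, and let `m = |A_k|`.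
Then every permutation `Π` with `s(Π(𝒰))` lexicographically smaller than `s(𝒰)`
fixes the subfamily `𝒰_{m+1}` of members of cardinality at least `m+1`. -/
theorem lex_smaller_perm_fixes_upper {n : ℕ} (U : Finset (Finset (Fin n))) (hU : IsUCS U)
    (hne : U ≠ {Finset.univ, ∅})
    (A : Finset (Fin n)) (hA : A ∈ U) (hAne : A ≠ ∅)
    (hmax : ∀ B ∈ U, B ≠ ∅ → B ≠ A → setLT B A)
    (hnotcan : ¬ IsCanonical U) (hcan : IsCanonical (U.erase A))
    (π : Equiv.Perm (Fin n))
    (hπ : List.Lex (· < ·) (sStr (permFam π U)) (sStr U)) :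
    permFam π (U.filter (fun B => A.card + 1 ≤ B.card)) =
      U.filter (fun B => A.card + 1 ≤ B.card) :=
  lex_smaller_perm_fixes_upper_general U A hcan π hπ
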